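/- Suppose Assumption A holds and let σ > 0. For each N, let g̃_N be the Stieltjes transform of a probability measure on ℝ satisfying the subordination equation g̃_N(z) = ∫ dμ_{A_N}(x) / (z − σ² g̃_N(z) − x) for all z ∈ ℂ⁺ (so g̃_N is the Stieltjes transform of the free convolution μ_σ ⊞ μ_{A_N}), and let g be the Stieltjes transform of a probability measure on ℝ satisfying g(z) = ∫ dν(x) / (z − σ² g(z) − x) for all z ∈ ℂ⁺ (so g is the Stieltjes transform of μ_σ ⊞ ν). Then there exist a polynomial T with nonnegative coefficients and a sequence (b_N) of positive numbers converging to 0 such that for all N and all z ∈ ℂ⁺, | g̃_N(z) − g(z) | ≤ T(|Im z|^{-1}) · b_N. -/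

import Mathlib

open MeasureTheory Filter Matrix Topology

/-- Eigenvalues of a Hermitian matrix in decreasing order (junk value `0` otherwise). -/
noncomputable def eigsDesc {N : ℕ} (A : Matrix (Fin N) (Fin N) ℂ) : Fin N → ℝ :=
  if h : A.IsHermitian then fun i => (h.eigenvalues ∘ Tuple.sort h.eigenvalues) i.rev
  else 0

/-- The (topological) support of a measure on `ℝ`. -/
def msupport (ν : Measure ℝ) : Set ℝ := {x | ∀ U ∈ nhds x, 0 < ν U}

/-!
Write `s = (Im z)⁻¹` and `e_N(u) = N⁻¹ ∑ᵢ (u - λᵢ)⁻¹ - G_ν(u)` for the Stieltjes error of the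
spectrum `λ` of `A_N`. With `w̃ = z - σ² g̃_N` and `w = z - σ² g`, the two subordination equations
and the resolvent identity give `(g̃_N - g) (1 - σ² K) = e_N(w̃)`, where
`K = ∫ dν(x) / ((w̃ - x)(w - x))`. Imaginary parts of the same equations bound
`∫ |w - x|⁻² dν` by `1 / (Im z² + σ²)` and `∫ |w̃ - x|⁻² dν` by that plus `|e_N(w̃)| / Im z`, so
`|1 - σ² K|` stays away from `0` unless `e_N(w̃)` is already large; either way
`|g̃_N - g| ≤ 2 (1 + σ² s²)² |e_N(w̃)|`.

It remains to see that `β_N = sup_u |e_N(u)| / (s_u + s_u²)` tends to `0`: near the real axis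
the weight absorbs the trivial bound `2 s_u`; far from the origin `e_N(u) = O(|u|⁻²)` because
all spectra eventually lie in a fixed interval (the outliers `θ_j` are finitely many); on the
remaining compact set the `e_N` are equi-Lipschitz and converge pointwise by weak convergence,
hence uniformly. Then `b_N = β_N + (N + 1)⁻¹`.
-/

open scoped BoundedContinuousFunction

lemma tendstoUniformlyOn_of_lipschitzOnWith {ι X α : Type*} [PseudoMetricSpace X]
    [PseudoMetricSpace α] {F : ι → X → α} {f : X → α} {l : Filter ι} {K : Set X}
    (hK : IsCompact K) {C : NNReal} (hF : ∀ i, LipschitzOnWith C (F i) K)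
    (h : ∀ x ∈ K, Tendsto (fun i => F i x) l (𝓝 (f x))) : TendstoUniformlyOn F f l K := by
  have hcont : EquicontinuousOn F K :=
    (LipschitzOnWith.uniformEquicontinuousOn F C hF).equicontinuousOn
  have := (EquicontinuousOn.tendsto_uniformOnFun_iff_pi' (𝔖 := {K}) (by simpa using hK)
    (by simpa using hcont) l f).2 (tendsto_pi_nhds.2 fun x => h x (by simpa using x.2))
  exact UniformOnFun.tendsto_iff_tendstoUniformlyOn.1 this K rfl

lemma ae_mem_msupport (ν : Measure ℝ) : ∀ᵐ x ∂ν, x ∈ msupport ν := by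
  have : msupport ν = ν.support := by ext x; exact (Measure.mem_support_iff_forall x).symm
  exact this ▸ Measure.support_mem_ae

namespace Subordination

lemma im_le_norm_sub_ofReal (u : ℂ) (x : ℝ) : u.im ≤ ‖u - x‖ :=
  calc u.im ≤ |(u - x).im| := by simpa using le_abs_self u.im
    _ ≤ ‖u - x‖ := Complex.abs_im_le_norm _

lemma sub_ofReal_ne_zero {u : ℂ} (hu : 0 < u.im) (x : ℝ) : u - x ≠ 0 :=
  norm_pos_iff.1 (hu.trans_le (im_le_norm_sub_ofReal u x))

lemma norm_inv_sub_ofReal_le {u : ℂ} (hu : 0 < u.im) (x : ℝ) : ‖(u - x)⁻¹‖ ≤ u.im⁻¹ := by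
  rw [norm_inv]
  exact inv_anti₀ hu (im_le_norm_sub_ofReal u x)

noncomputable def cauchyKernel (u : ℂ) (hu : 0 < u.im) : ℝ →ᵇ ℂ :=
  .ofNormedAddCommGroup (fun x => (u - x)⁻¹)
    ((continuous_const.sub Complex.continuous_ofReal).inv₀ (sub_ofReal_ne_zero hu))
    u.im⁻¹ (norm_inv_sub_ofReal_le hu)

lemma integrable_inv_sub_ofReal (τ : Measure ℝ) [IsFiniteMeasure τ] {u : ℂ} (hu : 0 < u.im) :
    Integrable (fun x : ℝ => (u - x)⁻¹) τ :=
  (cauchyKernel u hu).integrable τ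

noncomputable def stieltjes (τ : Measure ℝ) (u : ℂ) : ℂ := ∫ x, (u - x)⁻¹ ∂τ

lemma norm_stieltjes_le (τ : Measure ℝ) [IsProbabilityMeasure τ] {u : ℂ} (hu : 0 < u.im) :
    ‖stieltjes τ u‖ ≤ u.im⁻¹ := by
  simpa [stieltjes] using
    norm_integral_le_of_norm_le_const (μ := τ) (ae_of_all _ (norm_inv_sub_ofReal_le hu))

lemma im_stieltjes (τ : Measure ℝ) [IsFiniteMeasure τ] {u : ℂ} (hu : 0 < u.im) :
    (stieltjes τ u).im = -u.im * ∫ x, ‖(u - x)⁻¹‖ ^ 2 ∂τ := by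
  rw [stieltjes, ← Complex.imCLM_apply,
    ← ContinuousLinearMap.integral_comp_comm _ (integrable_inv_sub_ofReal τ hu),
    ← integral_const_mul]
  congr 1 with x
  simp [Complex.inv_im, Complex.normSq_eq_norm_sq, div_eq_mul_inv, inv_pow]

lemma im_stieltjes_nonpos (τ : Measure ℝ) [IsFiniteMeasure τ] {u : ℂ} (hu : 0 < u.im) :
    (stieltjes τ u).im ≤ 0 := by
  rw [im_stieltjes τ hu, neg_mul]
  exact neg_nonpos.2 (mul_nonneg hu.le (integral_nonneg fun x => by positivity))

lemma norm_inv_sub_ofReal_sub_inv_le {u v : ℂ} {ε : ℝ} (hε : 0 < ε) (hu : ε ≤ u.im)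
    (hv : ε ≤ v.im) (x : ℝ) : ‖(u - x)⁻¹ - (v - x)⁻¹‖ ≤ ‖u - v‖ / ε ^ 2 := by
  have hux := sub_ofReal_ne_zero (hε.trans_le hu) x
  have hvx := sub_ofReal_ne_zero (hε.trans_le hv) x
  rw [inv_sub_inv hux hvx, norm_div, norm_mul, norm_sub_rev, sub_sub_sub_cancel_right, sq]
  gcongr
  · exact hu.trans (im_le_norm_sub_ofReal u x)
  · exact hv.trans (im_le_norm_sub_ofReal v x)

lemma norm_inv_sub_ofReal_sub_inv_le_of_abs_le {u : ℂ} (hu : 0 < u.im) {R y : ℝ} (hy : |y| ≤ R)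
    (hR : 2 * R ≤ ‖u‖) : ‖(u - y)⁻¹ - u⁻¹‖ ≤ 2 * R / ‖u‖ ^ 2 := by
  have hu0 : u ≠ 0 := fun h => by simp [h] at hu
  have hyR : ‖(y : ℂ)‖ ≤ R := by simpa using hy
  have hfar : ‖u‖ / 2 ≤ ‖u - y‖ := by linarith [norm_sub_norm_le u y]
  rw [inv_sub_inv (sub_ofReal_ne_zero hu y) hu0, sub_sub_cancel, norm_div, norm_mul]
  calc ‖(y : ℂ)‖ / (‖u - y‖ * ‖u‖) ≤ R / (‖u‖ / 2 * ‖u‖) := by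
        have := norm_pos_iff.2 hu0
        gcongr
        exact (abs_nonneg y).trans hy
    _ = 2 * R / ‖u‖ ^ 2 := by field_simp

section Resolvent

variable (τ : Measure ℝ) [IsFiniteMeasure τ] {u v : ℂ}

lemma integrable_norm_inv_sub_ofReal_sq (hu : 0 < u.im) :
    Integrable (fun x : ℝ => ‖(u - x)⁻¹‖ ^ 2) τ := by
  refine .of_bound (by fun_prop) (u.im⁻¹ ^ 2) (ae_of_all _ fun x => ?_)
  rw [Real.norm_of_nonneg (by positivity)]
  gcongr
  exact norm_inv_sub_ofReal_le hu x

lemma stieltjes_sub_stieltjes (hu : 0 < u.im) (hv : 0 < v.im) :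
    stieltjes τ u - stieltjes τ v = (v - u) * ∫ x, (u - x)⁻¹ * (v - x)⁻¹ ∂τ := by
  rw [stieltjes, stieltjes, ← integral_sub (integrable_inv_sub_ofReal τ hu)
    (integrable_inv_sub_ofReal τ hv), ← integral_const_mul]
  congr 1 with x
  have hux := sub_ofReal_ne_zero hu x
  have hvx := sub_ofReal_ne_zero hv x
  field_simp
  ring

lemma norm_integral_inv_mul_inv_le (hu : 0 < u.im) (hv : 0 < v.im) :
    ‖∫ x, (u - x)⁻¹ * (v - x)⁻¹ ∂τ‖
      ≤ ((∫ x, ‖(u - x)⁻¹‖ ^ 2 ∂τ) + ∫ x, ‖(v - x)⁻¹‖ ^ 2 ∂τ) / 2 := by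
  rw [← integral_add (integrable_norm_inv_sub_ofReal_sq τ hu)
    (integrable_norm_inv_sub_ofReal_sq τ hv), ← integral_div]
  refine norm_integral_le_of_norm_le (((integrable_norm_inv_sub_ofReal_sq τ hu).add
    (integrable_norm_inv_sub_ofReal_sq τ hv)).div_const 2) (ae_of_all _ fun x => ?_)
  rw [norm_mul, le_div_iff₀ two_pos]
  nlinarith [sq_nonneg (‖(u - x)⁻¹‖ - ‖(v - x)⁻¹‖)]

end Resolvent

noncomputable def empiricalError {N : ℕ} (lam : Fin N → ℝ) (ν : Measure ℝ) (f : ℝ → ℂ) : ℂ :=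
  (N : ℂ)⁻¹ * ∑ i, f (lam i) - ∫ x, f x ∂ν

section EmpiricalError

variable {N : ℕ} (lam : Fin N → ℝ) (ν : Measure ℝ)

lemma norm_average_le {a : Fin N → ℂ} {C : ℝ} (hC : 0 ≤ C) (ha : ∀ i, ‖a i‖ ≤ C) :
    ‖(N : ℂ)⁻¹ * ∑ i, a i‖ ≤ C := by
  rcases N.eq_zero_or_pos with rfl | hN
  · simpa using hC
  calc ‖(N : ℂ)⁻¹ * ∑ i, a i‖ ≤ (N : ℝ)⁻¹ * (N * C) := by
        rw [norm_mul, norm_inv, Complex.norm_natCast]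
        gcongr
        simpa using norm_sum_le_of_le Finset.univ fun i _ => ha i
    _ = C := inv_mul_cancel_left₀ (by positivity) C

lemma norm_empiricalError_le [IsProbabilityMeasure ν] {f : ℝ → ℂ} {C : ℝ} (hC : 0 ≤ C)
    (hlam : ∀ i, ‖f (lam i)‖ ≤ C) (hν : ∀ᵐ x ∂ν, ‖f x‖ ≤ C) :
    ‖empiricalError lam ν f‖ ≤ 2 * C := by
  have hint : ‖∫ x, f x ∂ν‖ ≤ C := by simpa using norm_integral_le_of_norm_le_const hν
  calc ‖empiricalError lam ν f‖ ≤ C + C :=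
        (norm_sub_le _ _).trans (add_le_add (norm_average_le hC hlam) hint)
    _ = 2 * C := by ring

lemma empiricalError_sub {f g : ℝ → ℂ} (hf : Integrable f ν) (hg : Integrable g ν) :
    empiricalError lam ν (fun x => f x - g x)
      = empiricalError lam ν f - empiricalError lam ν g := by
  simp only [empiricalError, integral_sub hf hg, Finset.sum_sub_distrib]
  ring

lemma empiricalError_const [IsProbabilityMeasure ν] (hN : N ≠ 0) (c : ℂ) :
    empiricalError lam ν (fun _ => c) = 0 := by
  simp [empiricalError, hN]

lemma map_empiricalError (L : ℂ →L[ℝ] ℝ) {f : ℝ → ℂ} (hf : Integrable f ν) :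
    L (empiricalError lam ν f) = (∑ i, L (f (lam i))) / N - ∫ x, L (f x) ∂ν := by
  have hsmul : (N : ℂ)⁻¹ * ∑ i, f (lam i) = (N : ℝ)⁻¹ • ∑ i, f (lam i) := by
    simp [Complex.real_smul]
  rw [empiricalError, map_sub, hsmul, map_smul, map_sum, smul_eq_mul, inv_mul_eq_div,
    ContinuousLinearMap.integral_comp_comm L hf]

end EmpiricalError

noncomputable def stieltjesError {N : ℕ} (lam : Fin N → ℝ) (ν : Measure ℝ) (u : ℂ) : ℂ :=
  empiricalError lam ν fun x => (u - x)⁻¹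

section StieltjesError

variable {N : ℕ} (lam : Fin N → ℝ) (ν : Measure ℝ) [IsProbabilityMeasure ν]

lemma norm_stieltjesError_le {u : ℂ} (hu : 0 < u.im) : ‖stieltjesError lam ν u‖ ≤ 2 * u.im⁻¹ :=
  norm_empiricalError_le lam ν (by positivity) (fun i => norm_inv_sub_ofReal_le hu _)
    (ae_of_all _ (norm_inv_sub_ofReal_le hu))

lemma norm_stieltjesError_sub_le {u v : ℂ} {ε : ℝ} (hε : 0 < ε) (hu : ε ≤ u.im) (hv : ε ≤ v.im) :
    ‖stieltjesError lam ν u - stieltjesError lam ν v‖ ≤ 2 / ε ^ 2 * ‖u - v‖ := by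
  rw [stieltjesError, stieltjesError, ← empiricalError_sub lam ν
    (integrable_inv_sub_ofReal ν (hε.trans_le hu)) (integrable_inv_sub_ofReal ν (hε.trans_le hv))]
  have hker := norm_inv_sub_ofReal_sub_inv_le hε hu hv
  calc _ ≤ 2 * (‖u - v‖ / ε ^ 2) :=
        norm_empiricalError_le lam ν (by positivity) (fun i => hker _) (ae_of_all _ hker)
    _ = 2 / ε ^ 2 * ‖u - v‖ := by ring

lemma norm_stieltjesError_le_of_far (hN : N ≠ 0) {u : ℂ} (hu : 0 < u.im) {R : ℝ}
    (hlam : ∀ i, |lam i| ≤ R) (hν : ∀ᵐ x ∂ν, |x| ≤ R) (hR : 2 * R ≤ ‖u‖) :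
    ‖stieltjesError lam ν u‖ ≤ 4 * R / ‖u‖ ^ 2 := by
  have hsplit : stieltjesError lam ν u = empiricalError lam ν fun x => (u - x)⁻¹ - u⁻¹ := by
    rw [empiricalError_sub lam ν (integrable_inv_sub_ofReal ν hu) (integrable_const _),
      empiricalError_const lam ν hN, sub_zero, stieltjesError]
  have hR0 : 0 ≤ R := by
    obtain ⟨x, hx⟩ := hν.exists
    exact (abs_nonneg x).trans hx
  rw [hsplit]
  calc _ ≤ 2 * (2 * R / ‖u‖ ^ 2) := norm_empiricalError_le lam ν (by positivity)
        (fun i => norm_inv_sub_ofReal_sub_inv_le_of_abs_le hu (hlam i) hR)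
        (hν.mono fun x hx => norm_inv_sub_ofReal_sub_inv_le_of_abs_le hu hx hR)
    _ = 4 * R / ‖u‖ ^ 2 := by ring

end StieltjesError

noncomputable def stieltjesErrorBound {N : ℕ} (lam : Fin N → ℝ) (ν : Measure ℝ) : ℝ :=
  ⨆ u : {u : ℂ // 0 < u.im}, ‖stieltjesError lam ν u‖ / (u.1.im⁻¹ + u.1.im⁻¹ ^ 2)

lemma div_inv_add_inv_sq_le_mul {a η : ℝ} (ha : 0 ≤ a) (hη : 0 < η) :
    a / (η⁻¹ + η⁻¹ ^ 2) ≤ a * η := by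
  have hexp : a * η * (η⁻¹ + η⁻¹ ^ 2) = a + a * η⁻¹ := by field_simp
  rw [div_le_iff₀ (by positivity), hexp]
  linarith [mul_nonneg ha (inv_nonneg.2 hη.le)]

lemma stieltjesErrorBound_nonneg {N : ℕ} (lam : Fin N → ℝ) (ν : Measure ℝ) :
    0 ≤ stieltjesErrorBound lam ν :=
  Real.iSup_nonneg fun u => by
    have hu : 0 < u.1.im := u.2
    positivity

section StieltjesErrorBound

variable {N : ℕ} (lam : Fin N → ℝ) (ν : Measure ℝ) [IsProbabilityMeasure ν]

lemma stieltjesError_div_le_of_im_le {u : ℂ} (hu : 0 < u.im) {ε : ℝ} (hε : 2 * u.im ≤ ε) :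
    ‖stieltjesError lam ν u‖ / (u.im⁻¹ + u.im⁻¹ ^ 2) ≤ ε := by
  have hεs : 2 ≤ ε * u.im⁻¹ := by rwa [← div_eq_mul_inv, le_div_iff₀ hu]
  rw [div_le_iff₀ (by positivity)]
  calc ‖stieltjesError lam ν u‖ ≤ 2 * u.im⁻¹ := norm_stieltjesError_le lam ν hu
    _ ≤ ε * u.im⁻¹ * u.im⁻¹ := by gcongr
    _ ≤ ε * (u.im⁻¹ + u.im⁻¹ ^ 2) := by
        nlinarith [mul_nonneg (hε.trans' (by positivity) : (0 : ℝ) ≤ ε) (inv_pos.2 hu).le]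

lemma bddAbove_stieltjesError_div :
    BddAbove (Set.range fun u : {u : ℂ // 0 < u.im} =>
      ‖stieltjesError lam ν u‖ / (u.1.im⁻¹ + u.1.im⁻¹ ^ 2)) :=
  ⟨2, Set.forall_mem_range.2 fun u => by
    have hu : 0 < u.1.im := u.2
    rw [div_le_iff₀ (by positivity)]
    linarith [norm_stieltjesError_le lam ν hu, sq_nonneg u.1.im⁻¹]⟩

lemma norm_stieltjesError_le_mul_bound {u : ℂ} (hu : 0 < u.im) :
    ‖stieltjesError lam ν u‖ ≤ (u.im⁻¹ + u.im⁻¹ ^ 2) * stieltjesErrorBound lam ν := by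
  have := le_ciSup (bddAbove_stieltjesError_div lam ν) ⟨u, hu⟩
  rwa [div_le_iff₀' (by positivity)] at this

end StieltjesErrorBound

section Convergence

variable {ν : Measure ℝ} [IsProbabilityMeasure ν] {lam : (N : ℕ) → Fin N → ℝ}

lemma tendsto_empiricalError
    (hweak : ∀ f : ℝ →ᵇ ℝ,
      Tendsto (fun N => (∑ i, f (lam N i)) / N) atTop (𝓝 (∫ x, f x ∂ν)))
    (f : ℝ →ᵇ ℂ) : Tendsto (fun N => empiricalError (lam N) ν f) atTop (𝓝 0) := by
  have hpart : ∀ L : ℂ →L[ℝ] ℝ,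
      Tendsto (fun N => L (empiricalError (lam N) ν f)) atTop (𝓝 0) := fun L => by
    simp_rw [map_empiricalError _ ν L (f.integrable ν)]
    simpa using (hweak (f.comp L L.lipschitz)).sub_const (∫ x, L (f x) ∂ν)
  rw [tendsto_zero_iff_norm_tendsto_zero]
  refine squeeze_zero (fun _ => norm_nonneg _) (fun _ => Complex.norm_le_abs_re_add_abs_im _) ?_
  simpa using ((hpart Complex.reCLM).abs.add (hpart Complex.imCLM).abs)

lemma tendsto_stieltjesError
    (hweak : ∀ f : ℝ →ᵇ ℝ,
      Tendsto (fun N => (∑ i, f (lam N i)) / N) atTop (𝓝 (∫ x, f x ∂ν)))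
    {u : ℂ} (hu : 0 < u.im) : Tendsto (fun N => stieltjesError (lam N) ν u) atTop (𝓝 0) :=
  tendsto_empiricalError hweak (cauchyKernel u hu)

lemma eventually_stieltjesErrorBound_le
    (hweak : ∀ f : ℝ →ᵇ ℝ,
      Tendsto (fun N => (∑ i, f (lam N i)) / N) atTop (𝓝 (∫ x, f x ∂ν)))
    {R : ℝ} (hν : ∀ᵐ x ∂ν, |x| ≤ R) (hlam : ∀ᶠ N in atTop, ∀ i, |lam N i| ≤ R)
    {ε : ℝ} (hε : 0 < ε) : ∀ᶠ N in atTop, stieltjesErrorBound (lam N) ν ≤ ε := by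
  obtain ⟨M, hM0, hMR, hMε⟩ : ∃ M, 0 < M ∧ 2 * R ≤ M ∧ 4 * R / ε ≤ M :=
    ⟨max 1 (max (2 * R) (4 * R / ε)), by positivity, by simp, by simp⟩
  set K := Metric.closedBall (0 : ℂ) M ∩ {u | ε / 2 ≤ u.im}
  have hK : IsCompact K :=
    (isCompact_closedBall 0 M).inter_right (isClosed_le continuous_const Complex.continuous_im)
  have hunif : TendstoUniformlyOn (fun N => stieltjesError (lam N) ν) 0 atTop K :=
    tendstoUniformlyOn_of_lipschitzOnWith hK
      (fun N => LipschitzOnWith.of_dist_le' fun u hu v hv => by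
        simpa [dist_eq_norm] using
          norm_stieltjesError_sub_le (lam N) ν (half_pos hε) hu.2 hv.2)
      fun u hu => tendsto_stieltjesError hweak ((half_pos hε).trans_le hu.2)
  filter_upwards [eventually_ne_atTop 0, hlam,
    Metric.tendstoUniformlyOn_iff.1 hunif (ε / M) (by positivity)] with N hN hNlam hNK
  refine Real.iSup_le (fun ⟨u, hu⟩ => ?_) hε.le
  have hweight := div_inv_add_inv_sq_le_mul (norm_nonneg (stieltjesError (lam N) ν u)) hu
  by_cases hnear : 2 * u.im ≤ ε
  · exact stieltjesError_div_le_of_im_le (lam N) ν hu hnear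
  by_cases hfar : M < ‖u‖
  · have hbound := norm_stieltjesError_le_of_far (lam N) ν hN hu hNlam hν (hMR.trans hfar.le)
    have hu0 : 0 < ‖u‖ := hM0.trans hfar
    calc _ ≤ ‖stieltjesError (lam N) ν u‖ * ‖u‖ :=
          hweight.trans (by gcongr; exact u.im_le_norm)
      _ ≤ 4 * R / ‖u‖ ^ 2 * ‖u‖ := by gcongr
      _ = 4 * R / ‖u‖ := by field_simp
      _ ≤ ε := by
          rw [div_le_iff₀ hu0]
          linarith [(div_le_iff₀' hε).1 (hMε.trans hfar.le)]
  · have huK : u ∈ K := ⟨by simpa using not_lt.1 hfar, show ε / 2 ≤ u.im by linarith⟩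
    have hsmall : ‖stieltjesError (lam N) ν u‖ < ε / M := by simpa using hNK u huK
    calc _ ≤ ‖stieltjesError (lam N) ν u‖ * u.im := hweight
      _ ≤ ε / M * M := by
          gcongr
          exact (u.im_le_norm).trans (not_lt.1 hfar)
      _ = ε := div_mul_cancel₀ ε hM0.ne'

lemma tendsto_stieltjesErrorBound
    (hweak : ∀ f : ℝ →ᵇ ℝ,
      Tendsto (fun N => (∑ i, f (lam N i)) / N) atTop (𝓝 (∫ x, f x ∂ν)))
    {R : ℝ} (hν : ∀ᵐ x ∂ν, |x| ≤ R) (hlam : ∀ᶠ N in atTop, ∀ i, |lam N i| ≤ R) :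
    Tendsto (fun N => stieltjesErrorBound (lam N) ν) atTop (𝓝 0) :=
  tendsto_order.2 ⟨fun _ ha => .of_forall fun _ => ha.trans_le (stieltjesErrorBound_nonneg _ ν),
    fun _ hε => (eventually_stieltjesErrorBound_le hweak hν hlam (half_pos hε)).mono
      fun _ hN => hN.trans_lt (half_lt_self hε)⟩

end Convergence

lemma le_inv_add_abs_div_of_mul_eq {η σ m t A : ℝ} (hη : 0 < η) (hm : 0 ≤ m) (hmη : m * η ≤ 1)
    (hA : (η + σ ^ 2 * m) * A = m + t) : A ≤ 1 / (η ^ 2 + σ ^ 2) + |t| / η := by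
  have hpos : 0 < η + σ ^ 2 * m := by positivity
  have hsplit : A = m / (η + σ ^ 2 * m) + t / (η + σ ^ 2 * m) := by
    rw [← add_div, eq_div_iff hpos.ne', mul_comm, hA]
  have hmass : m / (η + σ ^ 2 * m) ≤ 1 / (η ^ 2 + σ ^ 2) := by
    rw [div_le_div_iff₀ hpos (by positivity)]
    nlinarith
  have herr : t / (η + σ ^ 2 * m) ≤ |t| / η :=
    (div_le_div_of_nonneg_right (le_abs_self t) hpos.le).trans
      (div_le_div_of_nonneg_left (abs_nonneg t) hη (by nlinarith))
  linarith

lemma le_mul_of_mul_eq_of_sub_le {Δ X E c a M : ℝ} (hc : 0 < c) (ha : 0 ≤ a) (hE : 0 ≤ E)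
    (hΔ : 0 ≤ Δ) (hΔM : Δ ≤ M) (hX : c - a * E ≤ X) (h : Δ * X = E) : Δ ≤ 2 * (1 + a * M) / c * E := by
  have hM : 0 ≤ a * M * E := by have := hΔ.trans hΔM; positivity
  rw [div_mul_eq_mul_div, le_div_iff₀ hc]
  rcases le_or_gt (a * E) (c / 2) with hsmall | hlarge <;> nlinarith

section SubordinationEstimate

variable {ν : Measure ℝ} [IsProbabilityMeasure ν] {σ : ℝ} {z : ℂ}

lemma im_sub_mul (z g : ℂ) (σ : ℝ) : (z - (σ : ℂ) ^ 2 * g).im = z.im - σ ^ 2 * g.im := by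
  rw [Complex.sub_im, ← Complex.ofReal_pow, Complex.im_ofReal_mul]

lemma integral_norm_inv_sq_le_of_subordination (hz : 0 < z.im) {g e : ℂ} (hg : ‖g‖ ≤ z.im⁻¹)
    (hgim : g.im ≤ 0) (hsub : stieltjes ν (z - (σ : ℂ) ^ 2 * g) = g - e) :
    ∫ x, ‖(z - (σ : ℂ) ^ 2 * g - x)⁻¹‖ ^ 2 ∂ν ≤ 1 / (z.im ^ 2 + σ ^ 2) + ‖e‖ / z.im := by
  have hw : (z - (σ : ℂ) ^ 2 * g).im = z.im + σ ^ 2 * -g.im := by rw [im_sub_mul]; ring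
  have hmη : -g.im * z.im ≤ 1 := by
    have := (neg_le_abs g.im).trans ((Complex.abs_im_le_norm g).trans hg)
    calc -g.im * z.im ≤ z.im⁻¹ * z.im := by gcongr
      _ = 1 := inv_mul_cancel₀ hz.ne'
  have hm : 0 ≤ -g.im := neg_nonneg.2 hgim
  have him := im_stieltjes ν (hw ▸ (by positivity : 0 < z.im + σ ^ 2 * -g.im))
  rw [hsub, hw, Complex.sub_im] at him
  refine (le_inv_add_abs_div_of_mul_eq hz hm hmη (σ := σ) (t := e.im) ?_).trans ?_
  · linarith
  · gcongr
    exact Complex.abs_im_le_norm e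

lemma im_le_im_sub_mul {g : ℂ} (hgim : g.im ≤ 0) : z.im ≤ (z - (σ : ℂ) ^ 2 * g).im := by
  rw [im_sub_mul]
  nlinarith [sq_nonneg σ]

lemma norm_sub_le_of_subordination (hz : 0 < z.im) {g₁ g₂ e : ℂ}
    (hg₁ : ‖g₁‖ ≤ z.im⁻¹) (hg₁im : g₁.im ≤ 0) (hg₂ : ‖g₂‖ ≤ z.im⁻¹) (hg₂im : g₂.im ≤ 0)
    (h₁ : stieltjes ν (z - (σ : ℂ) ^ 2 * g₁) = g₁ - e)
    (h₂ : stieltjes ν (z - (σ : ℂ) ^ 2 * g₂) = g₂) :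
    ‖g₁ - g₂‖ ≤ 2 * (1 + σ ^ 2 * z.im⁻¹ ^ 2) ^ 2 * ‖e‖ := by
  have hA := integral_norm_inv_sq_le_of_subordination hz hg₁ hg₁im h₁
  have hB := integral_norm_inv_sq_le_of_subordination hz hg₂ hg₂im (e := 0) (by rwa [sub_zero])
  rw [norm_zero, zero_div, add_zero] at hB
  set η := z.im
  set w₁ := z - (σ : ℂ) ^ 2 * g₁
  set w₂ := z - (σ : ℂ) ^ 2 * g₂
  have hw₁ : 0 < w₁.im := hz.trans_le (im_le_im_sub_mul hg₁im)
  have hw₂ : 0 < w₂.im := hz.trans_le (im_le_im_sub_mul hg₂im)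
  set K := ∫ x, (w₁ - x)⁻¹ * (w₂ - x)⁻¹ ∂ν
  have hK : ‖K‖ ≤ _ := norm_integral_inv_mul_inv_le ν hw₁ hw₂
  have hlin : (g₁ - g₂) * (1 - (σ : ℂ) ^ 2 * K) = e := by
    have := stieltjes_sub_stieltjes ν hw₁ hw₂
    rw [h₁, h₂] at this
    linear_combination this
  have hX : η ^ 2 / (η ^ 2 + σ ^ 2) - σ ^ 2 / (2 * η) * ‖e‖ ≤ ‖1 - (σ : ℂ) ^ 2 * K‖ := by
    have hσK : ‖(σ : ℂ) ^ 2 * K‖ = σ ^ 2 * ‖K‖ := by simp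
    have hsplit : η ^ 2 / (η ^ 2 + σ ^ 2) - σ ^ 2 / (2 * η) * ‖e‖
        = 1 - σ ^ 2 * ((1 / (η ^ 2 + σ ^ 2) + ‖e‖ / η + 1 / (η ^ 2 + σ ^ 2)) / 2) := by
      field_simp
      ring
    calc _ = _ := hsplit
      _ ≤ 1 - σ ^ 2 * ‖K‖ := by gcongr; linarith
      _ ≤ ‖1 - (σ : ℂ) ^ 2 * K‖ := by
          have := norm_sub_norm_le (1 : ℂ) ((σ : ℂ) ^ 2 * K)
          rwa [norm_one, hσK] at this
  have hΔ : ‖g₁ - g₂‖ ≤ 2 / η := by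
    calc ‖g₁ - g₂‖ ≤ η⁻¹ + η⁻¹ := (norm_sub_le _ _).trans (add_le_add hg₁ hg₂)
      _ = 2 / η := by ring
  calc ‖g₁ - g₂‖ ≤ 2 * (1 + σ ^ 2 / (2 * η) * (2 / η)) / (η ^ 2 / (η ^ 2 + σ ^ 2)) * ‖e‖ :=
        le_mul_of_mul_eq_of_sub_le (by positivity) (by positivity) (norm_nonneg e) (norm_nonneg _)
          hΔ hX (by rw [← norm_mul, hlin])
    _ = 2 * (1 + σ ^ 2 * η⁻¹ ^ 2) ^ 2 * ‖e‖ := by field_simp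

end SubordinationEstimate

lemma norm_stieltjes_sub_le {N : ℕ} (lam : Fin N → ℝ) (ν : Measure ℝ) [IsProbabilityMeasure ν]
    (ρN ρ : Measure ℝ) [IsProbabilityMeasure ρN] [IsProbabilityMeasure ρ] {σ : ℝ} {z : ℂ}
    (hz : 0 < z.im)
    (hsubN : stieltjes ρN z = (N : ℂ)⁻¹ * ∑ i, (z - (σ : ℂ) ^ 2 * stieltjes ρN z - lam i)⁻¹)
    (hsub : stieltjes ρ z = stieltjes ν (z - (σ : ℂ) ^ 2 * stieltjes ρ z)) :
    ‖stieltjes ρN z - stieltjes ρ z‖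
      ≤ 2 * (1 + σ ^ 2 * z.im⁻¹ ^ 2) ^ 2 * ((z.im⁻¹ + z.im⁻¹ ^ 2) * stieltjesErrorBound lam ν) := by
  set w := z - (σ : ℂ) ^ 2 * stieltjes ρN z
  have him := im_stieltjes_nonpos ρN hz
  have hw : 0 < w.im := hz.trans_le (im_le_im_sub_mul him)
  have h₁ : stieltjes ν w = stieltjes ρN z - stieltjesError lam ν w := by
    rw [stieltjesError, empiricalError, ← hsubN, sub_sub_cancel]
    rfl
  have hinv : w.im⁻¹ ≤ z.im⁻¹ := inv_anti₀ hz (im_le_im_sub_mul him)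
  have herr : ‖stieltjesError lam ν w‖ ≤ (z.im⁻¹ + z.im⁻¹ ^ 2) * stieltjesErrorBound lam ν :=
    (norm_stieltjesError_le_mul_bound lam ν hw).trans
      (by gcongr; exact stieltjesErrorBound_nonneg lam ν)
  exact (norm_sub_le_of_subordination hz (norm_stieltjes_le ρN hz) him (norm_stieltjes_le ρ hz)
    (im_stieltjes_nonpos ρ hz) h₁ hsub.symm).trans (by gcongr)

lemma exists_eventually_abs_le {lam : (N : ℕ) → Fin N → ℝ} {S : Set ℝ}
    (hS : Bornology.IsBounded S) {J : ℕ} (θ : Fin J → ℝ)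
    (hbulk : ∀ ε > 0, ∀ᶠ N in atTop, ∀ i : Fin N,
      (∀ j, lam N i ≠ θ j) → ∃ y ∈ S, |lam N i - y| ≤ ε) :
    ∃ R, (∀ y ∈ S, |y| ≤ R) ∧ ∀ᶠ N in atTop, ∀ i, |lam N i| ≤ R := by
  obtain ⟨C, hC⟩ := isBounded_iff_forall_norm_le.1 hS
  obtain ⟨D, hD⟩ := Finite.exists_le fun j => |θ j|
  refine ⟨max C D + 1, fun y hy => ?_, ?_⟩
  · linarith [hC y hy, le_max_left C D, Real.norm_eq_abs y]
  filter_upwards [hbulk 1 one_pos] with N hN i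
  by_cases hθ : ∃ j, lam N i = θ j
  · obtain ⟨j, hj⟩ := hθ
    linarith [hj ▸ hD j, le_max_right C D]
  · obtain ⟨y, hy, hclose⟩ := hN i (not_exists.1 hθ)
    linarith [hC y hy, le_max_left C D, abs_sub_abs_le_abs_sub (lam N i) y, Real.norm_eq_abs y]

end Subordination

open Subordination Polynomial

theorem statement15_general
    (A : (N : ℕ) → Matrix (Fin N) (Fin N) ℂ)
    (ν : Measure ℝ) [IsProbabilityMeasure ν] (hνc : IsCompact (msupport ν))
    (hweak : ∀ f : BoundedContinuousFunction ℝ ℝ,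
      Tendsto (fun N => (∑ i, f (eigsDesc (A N) i)) / N) atTop (𝓝 (∫ x, f x ∂ν)))
    (J : ℕ) (θ : Fin J → ℝ)
    (hbulk : ∀ ε > 0, ∀ᶠ N in atTop, ∀ i : Fin N,
      (∀ j, eigsDesc (A N) i ≠ θ j) → ∃ y ∈ msupport ν, |eigsDesc (A N) i - y| ≤ ε)
    (σ : ℝ)
    (ρN : ℕ → Measure ℝ) (hρN : ∀ N, IsProbabilityMeasure (ρN N))
    (hsubN : ∀ N, 1 ≤ N → ∀ z : ℂ, 0 < z.im →
      (∫ x, (z - (x : ℂ))⁻¹ ∂(ρN N))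
        = (N : ℂ)⁻¹ * ∑ i, (z - (σ ^ 2 : ℂ) * (∫ x, (z - (x : ℂ))⁻¹ ∂(ρN N))
            - (eigsDesc (A N) i : ℂ))⁻¹)
    (ρ : Measure ℝ) [IsProbabilityMeasure ρ]
    (hsub : ∀ z : ℂ, 0 < z.im →
      (∫ x, (z - (x : ℂ))⁻¹ ∂ρ)
        = ∫ x, (z - (σ ^ 2 : ℂ) * (∫ y, (z - (y : ℂ))⁻¹ ∂ρ) - (x : ℂ))⁻¹ ∂ν) :
    ∃ (T : Polynomial ℝ) (b : ℕ → ℝ), (∀ n, 0 ≤ T.coeff n) ∧ (∀ N, 0 < b N) ∧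
      Tendsto b atTop (𝓝 0) ∧
      ∀ (N : ℕ), 1 ≤ N → ∀ (z : ℂ), 0 < z.im →
        ‖(∫ x, (z - (x : ℂ))⁻¹ ∂(ρN N)) - ∫ x, (z - (x : ℂ))⁻¹ ∂ρ‖
          ≤ T.eval |z.im|⁻¹ * b N := by
  obtain ⟨R, hR, hlamR⟩ := exists_eventually_abs_le hνc.isBounded θ hbulk
  have hβ := tendsto_stieltjesErrorBound (lam := fun N => eigsDesc (A N)) hweak
    ((ae_mem_msupport ν).mono hR) hlamR
  -- `T (s) = 2 (s + s ^ 2) (1 + σ ^ 2 s ^ 2) ^ 2`, expanded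
  refine ⟨C 2 * X + C 2 * X ^ 2 + C (4 * σ ^ 2) * X ^ 3 + C (4 * σ ^ 2) * X ^ 4
      + C (2 * σ ^ 4) * X ^ 5 + C (2 * σ ^ 4) * X ^ 6,
    fun N => stieltjesErrorBound (eigsDesc (A N)) ν + ((N : ℝ) + 1)⁻¹, fun n => ?_,
    fun N => add_pos_of_nonneg_of_pos (stieltjesErrorBound_nonneg _ ν) (by positivity), ?_,
    fun N hN z hz => ?_⟩
  · simp only [coeff_add, coeff_C_mul, coeff_X_pow, coeff_X, mul_ite, mul_one, mul_zero]
    split_ifs <;> positivity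
  · simpa using hβ.add tendsto_one_div_add_atTop_nhds_zero_nat
  · have := hρN N
    refine (norm_stieltjes_sub_le (eigsDesc (A N)) ν (ρN N) ρ hz (hsubN N hN z hz)
      (hsub z hz)).trans ?_
    rw [abs_of_pos hz]
    simp only [eval_add, eval_mul, eval_C, eval_X, eval_pow]
    calc _ = 2 * (1 + σ ^ 2 * z.im⁻¹ ^ 2) ^ 2 * (z.im⁻¹ + z.im⁻¹ ^ 2)
          * stieltjesErrorBound (eigsDesc (A N)) ν := by ring
      _ ≤ 2 * (1 + σ ^ 2 * z.im⁻¹ ^ 2) ^ 2 * (z.im⁻¹ + z.im⁻¹ ^ 2)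
          * (stieltjesErrorBound (eigsDesc (A N)) ν + ((N : ℝ) + 1)⁻¹) := by
          gcongr
          exact le_add_of_nonneg_right (by positivity)
      _ = _ := by ring

/-- under Assumption A, if `g̃_N` (Stieltjes transform of `μ_σ ⊞ μ_{A_N}`) and
`g` (Stieltjes transform of `μ_σ ⊞ ν`) satisfy the semicircular subordination equations, then
`|g̃_N(z) − g(z)| ≤ T(|Im z|⁻¹)·b_N` on `ℂ⁺` with `T` of nonnegative coefficients and
`b_N → 0`. -/
theorem statement15
    (A : (N : ℕ) → Matrix (Fin N) (Fin N) ℂ) (hAh : ∀ N, (A N).IsHermitian)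
    (ν : Measure ℝ) [IsProbabilityMeasure ν] (hνc : IsCompact (msupport ν))
    (hweak : ∀ f : BoundedContinuousFunction ℝ ℝ,
      Tendsto (fun N => (∑ i, f (eigsDesc (A N) i)) / N) atTop (𝓝 (∫ x, f x ∂ν)))
    (r J : ℕ) (θ : Fin J → ℝ) (k : Fin J → ℕ)
    (hθ : StrictAnti θ) (hθsupp : ∀ j, θ j ∉ msupport ν)
    (hk : ∀ j, 1 ≤ k j) (hksum : ∑ j, k j = r)
    (hmult : ∀ N, r ≤ N → ∀ j, {i : Fin N | eigsDesc (A N) i = θ j}.ncard = k j)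
    (hbulk : ∀ ε > 0, ∀ᶠ N in atTop, ∀ i : Fin N,
      (∀ j, eigsDesc (A N) i ≠ θ j) → ∃ y ∈ msupport ν, |eigsDesc (A N) i - y| ≤ ε)
    (σ : ℝ) (hσ : 0 < σ)
    (ρN : ℕ → Measure ℝ) (hρN : ∀ N, IsProbabilityMeasure (ρN N))
    (hsubN : ∀ N, 1 ≤ N → ∀ z : ℂ, 0 < z.im →
      (∫ x, (z - (x : ℂ))⁻¹ ∂(ρN N))
        = (N : ℂ)⁻¹ * ∑ i, (z - (σ ^ 2 : ℂ) * (∫ x, (z - (x : ℂ))⁻¹ ∂(ρN N))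
            - (eigsDesc (A N) i : ℂ))⁻¹)
    (ρ : Measure ℝ) [IsProbabilityMeasure ρ]
    (hsub : ∀ z : ℂ, 0 < z.im →
      (∫ x, (z - (x : ℂ))⁻¹ ∂ρ)
        = ∫ x, (z - (σ ^ 2 : ℂ) * (∫ y, (z - (y : ℂ))⁻¹ ∂ρ) - (x : ℂ))⁻¹ ∂ν) :
    ∃ (T : Polynomial ℝ) (b : ℕ → ℝ), (∀ n, 0 ≤ T.coeff n) ∧ (∀ N, 0 < b N) ∧
      Tendsto b atTop (𝓝 0) ∧
      ∀ (N : ℕ), 1 ≤ N → ∀ (z : ℂ), 0 < z.im →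
        ‖(∫ x, (z - (x : ℂ))⁻¹ ∂(ρN N)) - ∫ x, (z - (x : ℂ))⁻¹ ∂ρ‖
          ≤ T.eval |z.im|⁻¹ * b N :=
  statement15_general A ν hνc hweak J θ hbulk σ ρN hρN hsubN ρ hsub
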